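/- There exists a constant C > 0, independent of h, the center of K, u and w, such that for every h > 0, every square K of half side h, every function u of class C⁴ on a neighborhood of K, and every w in the shape space P(K) = P₂(K) + span{x₁³, x₂³}, the contribution of the mixed tangential–normal derivatives on the pair of opposite vertical edges satisfies |∫_{x₂c−h}^{x₂c+h} [ (∂²u/∂x₁∂x₂)(x₁c+h, x₂) · (R⁰_{e₂}(∂w/∂x₂))(x₂) − (∂²u/∂x₁∂x₂)(x₁c−h, x₂) · (R⁰_{e₄}(∂w/∂x₂))(x₂) ] dx₂| ≤ C h² |u|_{H⁴(K)} |w|_{H²(K)}. -/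

import Mathlib

open MeasureTheory

/-- Partial derivative in the first variable of a curried function on `ℝ²`. -/
noncomputable def pdx (f : ℝ → ℝ → ℝ) : ℝ → ℝ → ℝ := fun x y => deriv (fun t => f t y) x

/-- Partial derivative in the second variable of a curried function on `ℝ²`. -/
noncomputable def pdy (f : ℝ → ℝ → ℝ) : ℝ → ℝ → ℝ := fun x y => deriv (fun t => f x t) y

/-- Membership in the shape space `P(K) = P₂(K) + span{x₁³, x₂³}` of the two-dimensional
rectangular Morley element. -/
def MorleyShape2 (w : ℝ → ℝ → ℝ) : Prop :=
  ∃ c0 c1 c2 c3 c4 c5 c6 c7 : ℝ, ∀ x y : ℝ,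
    w x y = c0 + c1 * x + c2 * y + c3 * x ^ 2 + c4 * (x * y) + c5 * y ^ 2
      + c6 * x ^ 3 + c7 * y ^ 3

/-- The `H²` seminorm of `v` on the rectangle `[a,b] × [c,d]`, each ordering of mixed
partial derivatives counted. -/
noncomputable def semiH2R (v : ℝ → ℝ → ℝ) (a b c d : ℝ) : ℝ :=
  Real.sqrt (∫ x in a..b, ∫ y in c..d,
    (pdx (pdx v) x y) ^ 2 + (pdx (pdy v) x y) ^ 2 + (pdy (pdx v) x y) ^ 2
      + (pdy (pdy v) x y) ^ 2)

/-- The `H⁴` seminorm of `u` on the rectangle `[a,b] × [c,d]`, each ordering of mixed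
partial derivatives counted (hence the binomial coefficients). -/
noncomputable def semiH4R (u : ℝ → ℝ → ℝ) (a b c d : ℝ) : ℝ :=
  Real.sqrt (∫ x in a..b, ∫ y in c..d,
    (pdx (pdx (pdx (pdx u))) x y) ^ 2 + 4 * (pdx (pdx (pdx (pdy u))) x y) ^ 2
      + 6 * (pdx (pdx (pdy (pdy u))) x y) ^ 2 + 4 * (pdx (pdy (pdy (pdy u))) x y) ^ 2
      + (pdy (pdy (pdy (pdy u))) x y) ^ 2)

/-- `u` is of class `C⁴` on a neighborhood of the rectangle `[a,b] × [c,d]`. -/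
def C4Near (u : ℝ → ℝ → ℝ) (a b c d : ℝ) : Prop :=
  ∃ U : Set (ℝ × ℝ), IsOpen U ∧ Set.Icc a b ×ˢ Set.Icc c d ⊆ U ∧
    ContDiffOn ℝ 4 (fun p : ℝ × ℝ => u p.1 p.2) U

/-!
On a vertical edge, `∂w/∂x₂` of a shape function is `c₂ + c₄ x₁` plus a quadratic in `x₂` that
does not depend on `x₁`. Subtracting the edge mean removes the `x₁`-dependent part, so both
edges carry the same weight `S'`, with `S` a cubic vanishing at the corners. Integrating by
parts in `x₂` and using the fundamental theorem of calculus in `x₁` turns the edge difference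
into `-∫_K ∂⁴u/∂x₁²∂x₂² · S`. The coefficients of `S` are read off from `∂²w/∂x₂²`, so
`|S| ≤ h |w|_{H²(K)}`, and Cauchy–Schwarz gives `∫_K |∂⁴u/∂x₁²∂x₂²| ≤ 2h |u|_{H⁴(K)}`;
hence `C = 2`.
-/

open Set Function Filter Topology

section PartialDerivatives

variable {v : ℝ → ℝ → ℝ} {U : Set (ℝ × ℝ)}

theorem hasDerivAt_pdx {x y : ℝ} (hv : DifferentiableAt ℝ (uncurry v) (x, y)) :
    HasDerivAt (fun t => v t y) (pdx v x y) x :=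
  have hslice : DifferentiableAt ℝ (uncurry v ∘ fun t => (t, y)) x := hv.comp x (by fun_prop)
  hslice.hasDerivAt

theorem hasDerivAt_pdy {x y : ℝ} (hv : DifferentiableAt ℝ (uncurry v) (x, y)) :
    HasDerivAt (fun t => v x t) (pdy v x y) y :=
  have hslice : DifferentiableAt ℝ (uncurry v ∘ fun t => (x, t)) y := hv.comp y (by fun_prop)
  hslice.hasDerivAt

theorem pdx_eq_fderiv {p : ℝ × ℝ} (hv : DifferentiableAt ℝ (uncurry v) p) :
    pdx v p.1 p.2 = fderiv ℝ (uncurry v) p (1, 0) :=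
  have hslice : HasDerivAt (uncurry v ∘ fun t => (t, p.2)) (fderiv ℝ (uncurry v) p (1, 0)) p.1 :=
    hv.hasFDerivAt.comp_hasDerivAt p.1 ((hasDerivAt_id p.1).prodMk (hasDerivAt_const p.1 p.2))
  (hasDerivAt_pdx hv).unique hslice

theorem pdy_eq_fderiv {p : ℝ × ℝ} (hv : DifferentiableAt ℝ (uncurry v) p) :
    pdy v p.1 p.2 = fderiv ℝ (uncurry v) p (0, 1) :=
  have hslice : HasDerivAt (uncurry v ∘ fun t => (p.1, t)) (fderiv ℝ (uncurry v) p (0, 1)) p.2 :=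
    hv.hasFDerivAt.comp_hasDerivAt p.2 ((hasDerivAt_const p.2 p.1).prodMk (hasDerivAt_id p.2))
  (hasDerivAt_pdy hv).unique hslice

theorem DifferentiableOn.eqOn_pdx_fderiv (hv : DifferentiableOn ℝ (uncurry v) U)
    (hU : IsOpen U) : EqOn (uncurry (pdx v)) (fun p => fderiv ℝ (uncurry v) p (1, 0)) U :=
  fun _ hp => pdx_eq_fderiv (hv.differentiableAt (hU.mem_nhds hp))

theorem DifferentiableOn.eqOn_pdy_fderiv (hv : DifferentiableOn ℝ (uncurry v) U)
    (hU : IsOpen U) : EqOn (uncurry (pdy v)) (fun p => fderiv ℝ (uncurry v) p (0, 1)) U :=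
  fun _ hp => pdy_eq_fderiv (hv.differentiableAt (hU.mem_nhds hp))

theorem ContDiffOn.contDiffOn_pdx {m n : WithTop ℕ∞} (hv : ContDiffOn ℝ n (uncurry v) U)
    (hU : IsOpen U) (hmn : m + 1 ≤ n) : ContDiffOn ℝ m (uncurry (pdx v)) U :=
  ((hv.fderiv_of_isOpen hU hmn).clm_apply contDiffOn_const).congr
    ((hv.differentiableOn (by rintro rfl; simp at hmn)).eqOn_pdx_fderiv hU)

theorem ContDiffOn.contDiffOn_pdy {m n : WithTop ℕ∞} (hv : ContDiffOn ℝ n (uncurry v) U)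
    (hU : IsOpen U) (hmn : m + 1 ≤ n) : ContDiffOn ℝ m (uncurry (pdy v)) U :=
  ((hv.fderiv_of_isOpen hU hmn).clm_apply contDiffOn_const).congr
    ((hv.differentiableOn (by rintro rfl; simp at hmn)).eqOn_pdy_fderiv hU)

theorem Set.EqOn.eqOn_pdx {v' : ℝ → ℝ → ℝ} (h : EqOn (uncurry v) (uncurry v') U)
    (hU : IsOpen U) : EqOn (uncurry (pdx v)) (uncurry (pdx v')) U := by
  rintro ⟨x, y⟩ hp
  have hslice : (fun t => v t y) =ᶠ[𝓝 x] fun t => v' t y :=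
    eventually_of_mem ((continuous_id.prodMk continuous_const).continuousAt.preimage_mem_nhds
      (hU.mem_nhds hp)) fun _ ht => h ht
  exact hslice.deriv_eq

theorem ContDiffOn.eqOn_pdy_pdx (hv : ContDiffOn ℝ 2 (uncurry v) U) (hU : IsOpen U) :
    EqOn (uncurry (pdy (pdx v))) (uncurry (pdx (pdy v))) U := by
  intro p hp
  set F := uncurry v
  have hpU : U ∈ 𝓝 p := hU.mem_nhds hp
  have hF : ContDiffAt ℝ 2 F p := hv.contDiffAt hpU
  have hF' : DifferentiableAt ℝ (fderiv ℝ F) p :=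
    (hF.fderiv_right (m := 1) (by norm_num)).differentiableAt one_ne_zero
  have hv1 : DifferentiableOn ℝ F U := hv.differentiableOn (by norm_num)
  have second : ∀ e e' : ℝ × ℝ,
      fderiv ℝ (fun q => fderiv ℝ F q e) p e' = fderiv ℝ (fderiv ℝ F) p e' e := fun e e' => by
    rw [fderiv_clm_apply hF' (differentiableAt_const e)]
    simp
  have hsymm : IsSymmSndFDerivAt ℝ F p :=
    hF.isSymmSndFDerivAt (by simp [minSmoothness_of_isRCLikeNormedField])
  have hx : DifferentiableOn ℝ (uncurry (pdx v)) U :=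
    (hv.contDiffOn_pdx (m := 1) hU (by norm_num)).differentiableOn one_ne_zero
  have hy : DifferentiableOn ℝ (uncurry (pdy v)) U :=
    (hv.contDiffOn_pdy (m := 1) hU (by norm_num)).differentiableOn one_ne_zero
  calc pdy (pdx v) p.1 p.2
      = fderiv ℝ (uncurry (pdx v)) p (0, 1) := pdy_eq_fderiv (hx.differentiableAt hpU)
    _ = fderiv ℝ (fderiv ℝ F) p (0, 1) (1, 0) := by
        rw [(eventuallyEq_of_mem hpU (hv1.eqOn_pdx_fderiv hU)).fderiv_eq, second]
    _ = fderiv ℝ (fderiv ℝ F) p (1, 0) (0, 1) := hsymm.eq _ _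
    _ = fderiv ℝ (uncurry (pdy v)) p (1, 0) := by
        rw [(eventuallyEq_of_mem hpU (hv1.eqOn_pdy_fderiv hU)).fderiv_eq, second]
    _ = pdx (pdy v) p.1 p.2 := (pdx_eq_fderiv (hy.differentiableAt hpU)).symm

end PartialDerivatives

section Rectangles

variable {a b c d : ℝ}

theorem intervalIntegral_intervalIntegral_eq_setIntegral {f : ℝ → ℝ → ℝ} (hab : a ≤ b)
    (hcd : c ≤ d) (hf : IntegrableOn (uncurry f) (Icc a b ×ˢ Icc c d)) :
    ∫ x in a..b, ∫ y in c..d, f x y = ∫ p in Icc a b ×ˢ Icc c d, uncurry f p := by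
  simp_rw [intervalIntegral.integral_of_le hab, intervalIntegral.integral_of_le hcd,
    ← integral_Icc_eq_integral_Ioc]
  rw [Measure.volume_eq_prod] at hf ⊢
  exact (setIntegral_prod _ hf).symm

theorem intervalIntegral_intervalIntegral_mono {f g : ℝ → ℝ → ℝ} (hab : a ≤ b) (hcd : c ≤ d)
    (hf : IntegrableOn (uncurry f) (Icc a b ×ˢ Icc c d))
    (hg : IntegrableOn (uncurry g) (Icc a b ×ˢ Icc c d))
    (hfg : ∀ x ∈ Icc a b, ∀ y ∈ Icc c d, f x y ≤ g x y) :
    ∫ x in a..b, ∫ y in c..d, f x y ≤ ∫ x in a..b, ∫ y in c..d, g x y := by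
  rw [intervalIntegral_intervalIntegral_eq_setIntegral hab hcd hf,
    intervalIntegral_intervalIntegral_eq_setIntegral hab hcd hg]
  exact setIntegral_mono_on hf hg (measurableSet_Icc.prod measurableSet_Icc)
    fun p hp => hfg p.1 hp.1 p.2 hp.2

theorem integral_abs_le_sqrt_measure_mul_sqrt_integral_sq {α : Type*} [MeasurableSpace α]
    {μ : Measure α} [IsFiniteMeasure μ] {f : α → ℝ} (hf : Integrable f μ)
    (hf2 : Integrable (fun x => f x ^ 2) μ) :
    ∫ x, |f x| ∂μ ≤ √(μ.real univ) * √(∫ x, f x ^ 2 ∂μ) := by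
  have hf2' : MemLp (fun x => |f x|) (ENNReal.ofReal 2) μ := by
    rw [ENNReal.ofReal_ofNat, memLp_two_iff_integrable_sq hf.abs.1]
    simpa only [sq_abs] using hf2
  have := integral_mul_le_Lp_mul_Lq_of_nonneg Real.HolderConjugate.two_two
    (.of_forall fun x => abs_nonneg (f x)) (.of_forall fun _ => zero_le_one) hf2'
    (memLp_const 1)
  simp only [mul_one, integral_const, smul_eq_mul, Real.rpow_two, sq_abs,
    ← Real.sqrt_eq_rpow, one_pow] at this
  rwa [mul_comm]

theorem setIntegral_abs_le_sqrt_mul_sqrt_setIntegral_sq {f : ℝ × ℝ → ℝ} (hab : a ≤ b)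
    (hcd : c ≤ d) (hf : IntegrableOn f (Icc a b ×ˢ Icc c d))
    (hf2 : IntegrableOn (fun p => f p ^ 2) (Icc a b ×ˢ Icc c d)) :
    ∫ p in Icc a b ×ˢ Icc c d, |f p| ≤
      √((b - a) * (d - c)) * √(∫ p in Icc a b ×ˢ Icc c d, f p ^ 2) := by
  have : IsFiniteMeasure (volume.restrict (Icc a b ×ˢ Icc c d)) :=
    isFiniteMeasure_restrict.mpr (isCompact_Icc.prod isCompact_Icc).measure_ne_top
  convert integral_abs_le_sqrt_measure_mul_sqrt_integral_sq hf hf2 using 3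
  rw [measureReal_restrict_apply_univ, Measure.volume_eq_prod, measureReal_prod_prod,
    Real.volume_real_Icc_of_le hab, Real.volume_real_Icc_of_le hcd]

end Rectangles

section Seminorms

variable {v : ℝ → ℝ → ℝ} {U : Set (ℝ × ℝ)} {a b c d : ℝ}

theorem ContDiffOn.contDiffOn_partial {D : (ℝ → ℝ → ℝ) → ℝ → ℝ → ℝ} (hD : D = pdx ∨ D = pdy)
    {m n : WithTop ℕ∞} (hv : ContDiffOn ℝ n (uncurry v) U) (hU : IsOpen U) (hmn : m + 1 ≤ n) :
    ContDiffOn ℝ m (uncurry (D v)) U := by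
  rcases hD with rfl | rfl
  exacts [hv.contDiffOn_pdx hU hmn, hv.contDiffOn_pdy hU hmn]

theorem ContDiffOn.continuousOn_partial₂ {D₁ D₂ : (ℝ → ℝ → ℝ) → ℝ → ℝ → ℝ}
    (hD₁ : D₁ = pdx ∨ D₁ = pdy) (hD₂ : D₂ = pdx ∨ D₂ = pdy)
    (hv : ContDiffOn ℝ 2 (uncurry v) U) (hU : IsOpen U) :
    ContinuousOn (uncurry (D₁ (D₂ v))) U :=
  (((hv.contDiffOn_partial hD₂ (m := 1) hU (by norm_num)).contDiffOn_partial hD₁ (m := 0) hU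
    (by norm_num))).continuousOn

theorem ContDiffOn.continuousOn_partial₄ {D₁ D₂ D₃ D₄ : (ℝ → ℝ → ℝ) → ℝ → ℝ → ℝ}
    (hD₁ : D₁ = pdx ∨ D₁ = pdy) (hD₂ : D₂ = pdx ∨ D₂ = pdy) (hD₃ : D₃ = pdx ∨ D₃ = pdy)
    (hD₄ : D₄ = pdx ∨ D₄ = pdy) (hv : ContDiffOn ℝ 4 (uncurry v) U) (hU : IsOpen U) :
    ContinuousOn (uncurry (D₁ (D₂ (D₃ (D₄ v))))) U :=
  ((hv.contDiffOn_partial hD₄ (m := 3) hU (by norm_num)).contDiffOn_partial hD₃ (m := 2) hU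
    (by norm_num)).continuousOn_partial₂ hD₁ hD₂ hU

theorem sqrt_integral_sq_pdy_pdy_le_semiH2R (hv : ContDiff ℝ 2 (uncurry v)) (hab : a ≤ b)
    (hcd : c ≤ d) :
    √(∫ x in a..b, ∫ y in c..d, pdy (pdy v) x y ^ 2) ≤ semiH2R v a b c d := by
  have hv' := hv.contDiffOn (s := univ)
  have hxx := hv'.continuousOn_partial₂ (.inl rfl) (.inl rfl) isOpen_univ
  have hxy := hv'.continuousOn_partial₂ (.inl rfl) (.inr rfl) isOpen_univ
  have hyx := hv'.continuousOn_partial₂ (.inr rfl) (.inl rfl) isOpen_univ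
  have hyy := hv'.continuousOn_partial₂ (.inr rfl) (.inr rfl) isOpen_univ
  have hK : IsCompact (Icc a b ×ˢ Icc c d) := isCompact_Icc.prod isCompact_Icc
  refine Real.sqrt_le_sqrt (intervalIntegral_intervalIntegral_mono hab hcd ?_ ?_ ?_)
  · exact ((hyy.pow 2).mono (subset_univ _)).integrableOn_compact hK
  · exact (((((hxx.pow 2).add (hxy.pow 2)).add (hyx.pow 2)).add (hyy.pow 2)).mono
      (subset_univ _)).integrableOn_compact hK
  · intro x _ y _
    linarith [sq_nonneg (pdx (pdx v) x y), sq_nonneg (pdx (pdy v) x y),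
      sq_nonneg (pdy (pdx v) x y)]

theorem C4Near.sqrt_integral_sq_pdx_pdx_pdy_pdy_le_semiH4R {u : ℝ → ℝ → ℝ}
    (hu : C4Near u a b c d) (hab : a ≤ b) (hcd : c ≤ d) :
    √(∫ x in a..b, ∫ y in c..d, pdx (pdx (pdy (pdy u))) x y ^ 2) ≤ semiH4R u a b c d := by
  obtain ⟨U, hU, hKU, hu⟩ := hu
  have hxxxx := hu.continuousOn_partial₄ (.inl rfl) (.inl rfl) (.inl rfl) (.inl rfl) hU
  have hxxxy := hu.continuousOn_partial₄ (.inl rfl) (.inl rfl) (.inl rfl) (.inr rfl) hU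
  have hxxyy := hu.continuousOn_partial₄ (.inl rfl) (.inl rfl) (.inr rfl) (.inr rfl) hU
  have hxyyy := hu.continuousOn_partial₄ (.inl rfl) (.inr rfl) (.inr rfl) (.inr rfl) hU
  have hyyyy := hu.continuousOn_partial₄ (.inr rfl) (.inr rfl) (.inr rfl) (.inr rfl) hU
  have hK : IsCompact (Icc a b ×ˢ Icc c d) := isCompact_Icc.prod isCompact_Icc
  refine Real.sqrt_le_sqrt (intervalIntegral_intervalIntegral_mono hab hcd ?_ ?_ ?_)
  · exact ((hxxyy.pow 2).mono hKU).integrableOn_compact hK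
  · exact ((((((hxxxx.pow 2).add (continuousOn_const.mul (hxxxy.pow 2))).add
      (continuousOn_const.mul (hxxyy.pow 2))).add (continuousOn_const.mul (hxyyy.pow 2))).add
      (hyyyy.pow 2)).mono hKU).integrableOn_compact hK
  · intro x _ y _
    linarith [sq_nonneg (pdx (pdx (pdx (pdx u))) x y), sq_nonneg (pdx (pdx (pdx (pdy u))) x y),
      sq_nonneg (pdx (pdx (pdy (pdy u))) x y), sq_nonneg (pdx (pdy (pdy (pdy u))) x y),
      sq_nonneg (pdy (pdy (pdy (pdy u))) x y)]

end Seminorms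

namespace C4Near

variable {u : ℝ → ℝ → ℝ} {a b c d : ℝ}

theorem integral_sub_mul_eq_neg_integral_integral (hu : C4Near u a b c d) (hab : a ≤ b)
    (hcd : c ≤ d) {S R : ℝ → ℝ} (hS : ∀ y ∈ Icc c d, HasDerivAt S (R y) y)
    (hR : IntervalIntegrable R volume c d) (hSc : S c = 0) (hSd : S d = 0) :
    ∫ y in c..d, (pdx (pdy u) b y - pdx (pdy u) a y) * R y =
      -∫ x in a..b, ∫ y in c..d, pdx (pdx (pdy (pdy u))) x y * S y := by
  obtain ⟨U, hU, hKU, hu⟩ := hu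
  have hmem : ∀ x ∈ Icc a b, ∀ y ∈ Icc c d, (x, y) ∈ U := fun x hx y hy => hKU ⟨hx, hy⟩
  have hg : ContDiffOn ℝ 2 (uncurry (pdx (pdy u))) U :=
    (hu.contDiffOn_pdy (m := 3) hU (by norm_num)).contDiffOn_pdx hU (by norm_num)
  have hG : ContDiffOn ℝ 1 (uncurry (pdy (pdx (pdy u)))) U := hg.contDiffOn_pdy hU (by norm_num)
  have hGx : ContinuousOn (uncurry (pdx (pdy (pdx (pdy u))))) U :=
    (hG.contDiffOn_pdx (m := 0) hU (by norm_num)).continuousOn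
  have hScont : ContinuousOn S (Icc c d) :=
    fun y hy => (hS y hy).continuousAt.continuousWithinAt
  have hGS : ContinuousOn (uncurry fun x y => pdx (pdy (pdx (pdy u))) x y * S y)
      (Icc a b ×ˢ Icc c d) :=
    (hGx.mono hKU).mul (hScont.comp continuousOn_snd fun _ hp => hp.2)
  have ibp : ∫ y in c..d, (pdx (pdy u) b y - pdx (pdy u) a y) * R y =
      -∫ y in c..d, (pdy (pdx (pdy u)) b y - pdy (pdx (pdy u)) a y) * S y := by
    have hslope : ∀ y ∈ uIcc c d, HasDerivAt (fun t => pdx (pdy u) b t - pdx (pdy u) a t)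
        (pdy (pdx (pdy u)) b y - pdy (pdx (pdy u)) a y) y := by
      intro y hy
      rw [uIcc_of_le hcd] at hy
      have hd : ∀ x ∈ Icc a b, DifferentiableAt ℝ (uncurry (pdx (pdy u))) (x, y) :=
        fun x hx => (hg.differentiableOn two_ne_zero).differentiableAt
          (hU.mem_nhds (hmem x hx y hy))
      exact (hasDerivAt_pdy (hd b (right_mem_Icc.2 hab))).sub
        (hasDerivAt_pdy (hd a (left_mem_Icc.2 hab)))
    have hslope_int : IntervalIntegrable
        (fun y => pdy (pdx (pdy u)) b y - pdy (pdx (pdy u)) a y) volume c d := by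
      refine ContinuousOn.intervalIntegrable ?_
      rw [uIcc_of_le hcd]
      exact (hG.continuousOn.comp (by fun_prop) fun y hy => hmem b (right_mem_Icc.2 hab) y hy).sub
        (hG.continuousOn.comp (by fun_prop) fun y hy => hmem a (left_mem_Icc.2 hab) y hy)
    rw [intervalIntegral.integral_mul_deriv_eq_deriv_mul hslope
      (fun y hy => hS y (uIcc_of_le hcd ▸ hy)) hslope_int hR, hSc, hSd]
    ring
  have ftc : ∀ y ∈ Icc c d, pdy (pdx (pdy u)) b y - pdy (pdx (pdy u)) a y =
      ∫ x in a..b, pdx (pdy (pdx (pdy u))) x y := by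
    intro y hy
    refine (intervalIntegral.integral_eq_sub_of_hasDerivAt
      (f := fun x => pdy (pdx (pdy u)) x y) (fun x hx => ?_) ?_).symm
    · rw [uIcc_of_le hab] at hx
      exact hasDerivAt_pdx ((hG.differentiableOn one_ne_zero).differentiableAt
        (hU.mem_nhds (hmem x hx y hy)))
    · refine ContinuousOn.intervalIntegrable ?_
      rw [uIcc_of_le hab]
      exact hGx.comp (by fun_prop) fun x hx => hmem x hx y hy
  have swap : ∫ y in c..d, (pdy (pdx (pdy u)) b y - pdy (pdx (pdy u)) a y) * S y =
      ∫ x in a..b, ∫ y in c..d, pdx (pdy (pdx (pdy u))) x y * S y := by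
    have hint : IntegrableOn (uncurry fun x y => pdx (pdy (pdx (pdy u))) x y * S y)
        (uIoc a b ×ˢ uIoc c d) := by
      rw [uIoc_of_le hab, uIoc_of_le hcd]
      exact (hGS.integrableOn_compact (isCompact_Icc.prod isCompact_Icc)).mono_set
        (prod_mono Ioc_subset_Icc_self Ioc_subset_Icc_self)
    rw [intervalIntegral_intervalIntegral_swap hint]
    refine intervalIntegral.integral_congr fun y hy => ?_
    rw [uIcc_of_le hcd] at hy
    simp only [ftc y hy, intervalIntegral.integral_mul_const]
  have symm : EqOn (uncurry (pdx (pdy (pdx (pdy u))))) (uncurry (pdx (pdx (pdy (pdy u))))) U :=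
    ((hu.contDiffOn_pdy (m := 2) hU (by norm_num)).eqOn_pdy_pdx hU).eqOn_pdx hU
  rw [ibp, swap]
  congr 1
  refine intervalIntegral.integral_congr fun x hx => intervalIntegral.integral_congr fun y hy => ?_
  rw [uIcc_of_le hab] at hx
  rw [uIcc_of_le hcd] at hy
  have hxy := symm (hmem x hx y hy)
  simp only [uncurry_apply_pair] at hxy
  rw [hxy]

end C4Near

namespace C4Near

variable {u : ℝ → ℝ → ℝ} {a b c d : ℝ}

theorem abs_integral_integral_mul_le (hu : C4Near u a b c d) (hab : a ≤ b) (hcd : c ≤ d)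
    {S : ℝ → ℝ} (hS : ContinuousOn S (Icc c d)) {M : ℝ} (hSM : ∀ y ∈ Icc c d, |S y| ≤ M) :
    |∫ x in a..b, ∫ y in c..d, pdx (pdx (pdy (pdy u))) x y * S y| ≤
      M * (√((b - a) * (d - c)) * semiH4R u a b c d) := by
  set f := uncurry (pdx (pdx (pdy (pdy u))))
  set K := Icc a b ×ˢ Icc c d
  have hK : IsCompact K := isCompact_Icc.prod isCompact_Icc
  have hf : ContinuousOn f K := by
    obtain ⟨U, hU, hKU, hu⟩ := hu
    exact (hu.continuousOn_partial₄ (.inl rfl) (.inl rfl) (.inr rfl) (.inr rfl) hU).mono hKU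
  have hf2 : ContinuousOn (fun p => f p ^ 2) K := hf.pow 2
  have hS' : ContinuousOn (fun p : ℝ × ℝ => S p.2) K := hS.comp continuousOn_snd fun _ hp => hp.2
  have hM : 0 ≤ M := (abs_nonneg _).trans (hSM c (left_mem_Icc.2 hcd))
  calc |∫ x in a..b, ∫ y in c..d, pdx (pdx (pdy (pdy u))) x y * S y|
      = |∫ p in K, f p * S p.2| := by
        rw [intervalIntegral_intervalIntegral_eq_setIntegral
          (f := fun x y => pdx (pdx (pdy (pdy u))) x y * S y) hab hcd
          ((hf.mul hS').integrableOn_compact hK)]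
        rfl
    _ ≤ ∫ p in K, M * |f p| :=
        norm_integral_le_of_norm_le ((hf.abs.integrableOn_compact hK).const_mul M)
          (ae_restrict_of_forall_mem (measurableSet_Icc.prod measurableSet_Icc) fun p hp => by
            rw [Real.norm_eq_abs, abs_mul, mul_comm]
            exact mul_le_mul_of_nonneg_right (hSM p.2 hp.2) (abs_nonneg _))
    _ = M * ∫ p in K, |f p| := integral_const_mul M _
    _ ≤ M * (√((b - a) * (d - c)) * √(∫ p in K, f p ^ 2)) :=
        mul_le_mul_of_nonneg_left (setIntegral_abs_le_sqrt_mul_sqrt_setIntegral_sq hab hcd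
          (hf.integrableOn_compact hK) (hf2.integrableOn_compact hK)) hM
    _ ≤ M * (√((b - a) * (d - c)) * semiH4R u a b c d) := by
        refine mul_le_mul_of_nonneg_left (mul_le_mul_of_nonneg_left ?_ (Real.sqrt_nonneg _)) hM
        refine le_of_eq_of_le ?_ (hu.sqrt_integral_sq_pdx_pdx_pdy_pdy_le_semiH4R hab hcd)
        rw [intervalIntegral_intervalIntegral_eq_setIntegral
          (f := fun x y => pdx (pdx (pdy (pdy u))) x y ^ 2) hab hcd
          (hf2.integrableOn_compact hK)]
        rfl

end C4Near

theorem hasDerivAt_cubic (a₀ a₁ a₂ a₃ x : ℝ) :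
    HasDerivAt (fun t => a₀ + a₁ * t + a₂ * t ^ 2 + a₃ * t ^ 3)
      (a₁ + 2 * a₂ * x + 3 * a₃ * x ^ 2) x := by
  refine (((((hasDerivAt_id' x).const_mul a₁).const_add a₀).add
    ((hasDerivAt_pow 2 x).const_mul a₂)).add ((hasDerivAt_pow 3 x).const_mul a₃)).congr_deriv ?_
  norm_num
  ring

theorem integral_quadratic (a₁ a₂ a₃ p q : ℝ) :
    ∫ t in p..q, (a₁ + 2 * a₂ * t + 3 * a₃ * t ^ 2) =
      (a₁ * q + a₂ * q ^ 2 + a₃ * q ^ 3) - (a₁ * p + a₂ * p ^ 2 + a₃ * p ^ 3) := by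
  rw [intervalIntegral.integral_eq_sub_of_hasDerivAt (fun x _ => hasDerivAt_cubic 0 a₁ a₂ a₃ x)
    (by apply Continuous.intervalIntegrable; fun_prop)]
  ring

section RemainderPrimitive

variable (A B h : ℝ)

/-- In the edge coordinate `s = x₂ - x₂c`, `R⁰ₑ(∂w/∂x₂) = A s + B (s² - h²/3)`; this is its
primitive vanishing at both corners `s = ±h`. -/
noncomputable def remainderPrimitive (s : ℝ) : ℝ :=
  A * (s ^ 2 - h ^ 2) / 2 + B * (s ^ 3 - h ^ 2 * s) / 3

theorem hasDerivAt_remainderPrimitive (s : ℝ) :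
    HasDerivAt (remainderPrimitive A B h) (A * s + B * (s ^ 2 - h ^ 2 / 3)) s := by
  convert hasDerivAt_cubic (-(A * h ^ 2 / 2)) (-(B * h ^ 2 / 3)) (A / 2) (B / 3) s using 1
  · ext t
    simp only [remainderPrimitive]
    ring
  · ring

theorem remainderPrimitive_neg_self : remainderPrimitive A B h (-h) = 0 := by
  simp only [remainderPrimitive]
  ring

theorem remainderPrimitive_self : remainderPrimitive A B h h = 0 := by
  simp only [remainderPrimitive]
  ring

variable {A B h} in
theorem abs_remainderPrimitive_le {s : ℝ} (hs : |s| ≤ h) :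
    |remainderPrimitive A B h s| ≤ h ^ 2 * (|A| / 2 + |B| * h / 3) := by
  obtain ⟨hs₁, hs₂⟩ := abs_le.1 hs
  have hsq : |s ^ 2 - h ^ 2| ≤ h ^ 2 := by
    rw [abs_le]
    constructor <;> nlinarith
  have hcube : |s ^ 3 - h ^ 2 * s| ≤ h ^ 3 := by
    rw [abs_le]
    constructor
    · nlinarith [mul_nonneg (by linarith : 0 ≤ h + s) (sq_nonneg (h - s))]
    · nlinarith [mul_nonneg (by linarith : 0 ≤ h - s) (sq_nonneg (h + s))]
  calc |remainderPrimitive A B h s|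
      ≤ |A| * |s ^ 2 - h ^ 2| / 2 + |B| * |s ^ 3 - h ^ 2 * s| / 3 := by
        simp only [remainderPrimitive, ← abs_mul]
        refine (abs_add_le _ _).trans_eq ?_
        rw [abs_div, abs_div, abs_two, abs_of_pos (three_pos : (0:ℝ) < 3)]
    _ ≤ |A| * h ^ 2 / 2 + |B| * h ^ 3 / 3 := by gcongr
    _ = h ^ 2 * (|A| / 2 + |B| * h / 3) := by ring

end RemainderPrimitive

section MorleyCoefficients

variable {w : ℝ → ℝ → ℝ} {c₀ c₁ c₂ c₃ c₄ c₅ c₆ c₇ : ℝ}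

theorem pdy_eq_of_coeffs (hw : ∀ x y, w x y = c₀ + c₁ * x + c₂ * y + c₃ * x ^ 2 + c₄ * (x * y)
      + c₅ * y ^ 2 + c₆ * x ^ 3 + c₇ * y ^ 3) (x y : ℝ) :
    pdy w x y = c₂ + c₄ * x + 2 * c₅ * y + 3 * c₇ * y ^ 2 := by
  have hslice : (fun t => w x t) =
      fun t => (c₀ + c₁ * x + c₃ * x ^ 2 + c₆ * x ^ 3) + (c₂ + c₄ * x) * t + c₅ * t ^ 2
        + c₇ * t ^ 3 := by
    ext t
    rw [hw]
    ring
  rw [pdy, hslice, (hasDerivAt_cubic _ _ _ _ y).deriv]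

theorem pdy_pdy_eq_of_coeffs (hw : ∀ x y, w x y = c₀ + c₁ * x + c₂ * y + c₃ * x ^ 2
      + c₄ * (x * y) + c₅ * y ^ 2 + c₆ * x ^ 3 + c₇ * y ^ 3) (x y : ℝ) :
    pdy (pdy w) x y = 2 * c₅ + 6 * c₇ * y := by
  have hslice : (fun t => pdy w x t) = fun t => (c₂ + c₄ * x) + 2 * c₅ * t + 3 * c₇ * t ^ 2
      + 0 * t ^ 3 := by
    ext t
    rw [pdy_eq_of_coeffs hw]
    ring
  rw [pdy, hslice, (hasDerivAt_cubic _ _ _ _ y).deriv]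
  ring

theorem pdy_sub_average_eq_of_coeffs (hw : ∀ x y, w x y = c₀ + c₁ * x + c₂ * y + c₃ * x ^ 2
      + c₄ * (x * y) + c₅ * y ^ 2 + c₆ * x ^ 3 + c₇ * y ^ 3) {h : ℝ} (hh : h ≠ 0) (m x y : ℝ) :
    pdy w x y - 1 / (2 * h) * ∫ t in (m - h)..(m + h), pdy w x t =
      (2 * c₅ + 6 * c₇ * m) * (y - m) + 3 * c₇ * ((y - m) ^ 2 - h ^ 2 / 3) := by
  simp only [pdy_eq_of_coeffs hw, integral_quadratic]
  field_simp
  ring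

theorem mul_le_semiH2R_of_coeffs (hw : ∀ x y, w x y = c₀ + c₁ * x + c₂ * y + c₃ * x ^ 2
      + c₄ * (x * y) + c₅ * y ^ 2 + c₆ * x ^ 3 + c₇ * y ^ 3) {h : ℝ} (hh : 0 < h) (l m : ℝ) :
    h * (|2 * c₅ + 6 * c₇ * m| / 2 + |3 * c₇| * h / 3) ≤
      semiH2R w (l - h) (l + h) (m - h) (m + h) := by
  have hw2 : ContDiff ℝ 2 (uncurry w) := by
    have : uncurry w = fun p : ℝ × ℝ => c₀ + c₁ * p.1 + c₂ * p.2 + c₃ * p.1 ^ 2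
        + c₄ * (p.1 * p.2) + c₅ * p.2 ^ 2 + c₆ * p.1 ^ 3 + c₇ * p.2 ^ 3 := by
      ext p
      exact hw p.1 p.2
    rw [this]
    fun_prop
  refine le_trans ?_ (sqrt_integral_sq_pdy_pdy_le_semiH2R hw2 (by linarith) (by linarith))
  have hsq : ∀ y, (2 * c₅ + 6 * c₇ * y) ^ 2 =
      4 * c₅ ^ 2 + 2 * (12 * c₅ * c₇) * y + 3 * (12 * c₇ ^ 2) * y ^ 2 := fun y => by ring
  simp only [pdy_pdy_eq_of_coeffs hw, hsq, integral_quadratic, intervalIntegral.integral_const,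
    smul_eq_mul]
  refine Real.le_sqrt_of_sq_le ?_
  have hval : (l + h - (l - h)) *
      (4 * c₅ ^ 2 * (m + h) + 12 * c₅ * c₇ * (m + h) ^ 2 + 12 * c₇ ^ 2 * (m + h) ^ 3 -
        (4 * c₅ ^ 2 * (m - h) + 12 * c₅ * c₇ * (m - h) ^ 2 + 12 * c₇ ^ 2 * (m - h) ^ 3)) =
      4 * h ^ 2 * |2 * c₅ + 6 * c₇ * m| ^ 2 + 16 / 3 * h ^ 4 * |3 * c₇| ^ 2 := by
    simp only [sq_abs]
    ring
  rw [hval]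
  nlinarith [mul_nonneg (sq_nonneg h) (sq_nonneg (|2 * c₅ + 6 * c₇ * m| - |3 * c₇| * h)),
    sq_nonneg (h * |2 * c₅ + 6 * c₇ * m|), sq_nonneg (h ^ 2 * |3 * c₇|)]

end MorleyCoefficients

/-- Superconvergence of the tangential-normal boundary term on a pair of opposite
vertical edges of one element. -/
theorem stmt_7 :
    ∃ C > (0:ℝ), ∀ h : ℝ, 0 < h → ∀ x1c x2c : ℝ, ∀ u w : ℝ → ℝ → ℝ,
      C4Near u (x1c - h) (x1c + h) (x2c - h) (x2c + h) → MorleyShape2 w →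
      |∫ y in (x2c - h)..(x2c + h),
          pdx (pdy u) (x1c + h) y
              * (pdy w (x1c + h) y
                - (1 / (2 * h)) * (∫ t in (x2c - h)..(x2c + h), pdy w (x1c + h) t))
            - pdx (pdy u) (x1c - h) y
              * (pdy w (x1c - h) y
                - (1 / (2 * h)) * (∫ t in (x2c - h)..(x2c + h), pdy w (x1c - h) t))|
        ≤ C * h ^ 2 * semiH4R u (x1c - h) (x1c + h) (x2c - h) (x2c + h) * semiH2R w (x1c - h) (x1c + h) (x2c - h) (x2c + h) := by
  refine ⟨2, two_pos, fun h hh x1c x2c u w hu hw => ?_⟩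
  obtain ⟨c₀, c₁, c₂, c₃, c₄, c₅, c₆, c₇, hw⟩ := hw
  set A := 2 * c₅ + 6 * c₇ * x2c
  set B := 3 * c₇
  set S := fun y => remainderPrimitive A B h (y - x2c)
  have hab : x1c - h ≤ x1c + h := by linarith
  have hcd : x2c - h ≤ x2c + h := by linarith
  have hS : ∀ y ∈ Icc (x2c - h) (x2c + h),
      HasDerivAt S (A * (y - x2c) + B * ((y - x2c) ^ 2 - h ^ 2 / 3)) y :=
    fun y _ => (hasDerivAt_remainderPrimitive A B h (y - x2c)).comp_sub_const y x2c
  have hSM : ∀ y ∈ Icc (x2c - h) (x2c + h), |S y| ≤ h ^ 2 * (|A| / 2 + |B| * h / 3) :=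
    fun y hy => abs_remainderPrimitive_le
      (abs_sub_le_iff.2 ⟨by linarith [hy.2], by linarith [hy.1]⟩)
  calc _ = |∫ y in (x2c - h)..(x2c + h), (pdx (pdy u) (x1c + h) y - pdx (pdy u) (x1c - h) y)
          * (A * (y - x2c) + B * ((y - x2c) ^ 2 - h ^ 2 / 3))| := by
        simp only [pdy_sub_average_eq_of_coeffs hw hh.ne', sub_mul]
        rfl
    _ = |∫ x in (x1c - h)..(x1c + h), ∫ y in (x2c - h)..(x2c + h),
          pdx (pdx (pdy (pdy u))) x y * S y| := by
        rw [hu.integral_sub_mul_eq_neg_integral_integral hab hcd hS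
          (by apply Continuous.intervalIntegrable; fun_prop)
          (by simp [S, remainderPrimitive_neg_self]) (by simp [S, remainderPrimitive_self]),
          abs_neg]
    _ ≤ h ^ 2 * (|A| / 2 + |B| * h / 3) * (√((x1c + h - (x1c - h)) * (x2c + h - (x2c - h)))
          * semiH4R u (x1c - h) (x1c + h) (x2c - h) (x2c + h)) :=
        hu.abs_integral_integral_mul_le hab hcd
          (fun y hy => (hS y hy).continuousAt.continuousWithinAt) hSM
    _ ≤ h * semiH2R w (x1c - h) (x1c + h) (x2c - h) (x2c + h) * (2 * h
          * semiH4R u (x1c - h) (x1c + h) (x2c - h) (x2c + h)) := by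
        have hvol : √((x1c + h - (x1c - h)) * (x2c + h - (x2c - h))) = 2 * h := by
          rw [← Real.sqrt_sq (by positivity : 0 ≤ 2 * h)]
          ring_nf
        rw [hvol, pow_two, mul_assoc h h]
        gcongr
        · exact mul_nonneg (by positivity) (Real.sqrt_nonneg _)
        · exact mul_le_semiH2R_of_coeffs hw hh x1c x2c
    _ = _ := by ring
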